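/- arXiv:2101.01764 — 2 statements merged into one kernel-verified Lean document; each statement's English description precedes it below -/
import Mathlib

section
/- Let (M,F) be an n-dimensional AR-Finsler manifold with n ≥ 2. Then ∂̇_k log η = (1/(n−1))·a^{ji}(∂̇_i a_{jk} − ∂̇_k a_{ij}); consequently ∂̇_k log(η(x,y)) is a rational function in y for each k. -/
def IsRat {n : ℕ} (U : Set (Fin n → ℝ)) (f : (Fin n → ℝ) → ℝ) : Prop :=
  ∃ P Q : MvPolynomial (Fin n) ℝ, Q ≠ 0 ∧
    ∀ y ∈ U, f y * MvPolynomial.eval y Q = MvPolynomial.eval y P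

noncomputable def pd {n : ℕ} (i : Fin n) (f : (Fin n → ℝ) → ℝ) (y : Fin n → ℝ) : ℝ :=
  fderiv ℝ f y (Pi.single i 1)

/-!
Contract the total symmetry `η ∂̇_i a_{jk} + a_{jk} ∂̇_i η = η ∂̇_k a_{ij} + a_{ij} ∂̇_k η`
with `a^{ji}`. Since `(a_{ij})` is symmetric with inverse `(a^{ij})`, the `∂̇η`-terms contract
to `∂̇_k η` on the left and to `tr(a⁻¹a) ∂̇_k η = n ∂̇_k η` on the right, so
`(n - 1) ∂̇_k η = η a^{ji}(∂̇_i a_{jk} - ∂̇_k a_{ij})`; divide by `(n - 1) η`.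

By Cramer's rule `a^{ij} = adj(a)_{ij} / det a` is rational, and rational functions on an open
set are closed under ring operations, inversion where nonzero, and partial derivatives; hence
so is the right-hand side.
-/

namespace MvPolynomial

variable {σ : Type*} [Fintype σ]

theorem hasFDerivAt_eval [DecidableEq σ] (P : MvPolynomial σ ℝ) (y : σ → ℝ) :
    HasFDerivAt (fun z => eval z P)
      (∑ i, eval y (pderiv i P) • ContinuousLinearMap.proj (R := ℝ) (φ := fun _ : σ => ℝ) i) y := by
  induction P using MvPolynomial.induction_on with
  | C c => simpa using hasFDerivAt_const c y
  | add p q hp hq =>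
    simpa only [map_add, eval_add, add_smul, Finset.sum_add_distrib] using hp.fun_add hq
  | mul_X p j hp =>
    have h : HasFDerivAt (fun z => eval z (p * X j))
        (eval y p • ContinuousLinearMap.proj j + y j • ∑ i, eval y (pderiv i p) •
          ContinuousLinearMap.proj (R := ℝ) (φ := fun _ : σ => ℝ) i) y := by
      simpa using hp.fun_mul (hasFDerivAt_apply j y)
    refine h.congr_fderiv (ContinuousLinearMap.ext fun v => ?_)
    simp [mul_add, Finset.sum_add_distrib, Pi.single_apply, apply_ite, Finset.mul_sum, mul_comm,
      mul_left_comm]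

theorem eq_zero_of_forall_mem_eval_eq_zero {U : Set (σ → ℝ)} (hU : IsOpen U)
    (hne : U.Nonempty) {P : MvPolynomial σ ℝ} (h : ∀ y ∈ U, eval y P = 0) : P = 0 := by
  obtain ⟨y, hy⟩ := hne
  obtain ⟨r, hr, hball⟩ := Metric.isOpen_iff.1 hU y hy
  refine funext_set (fun i => Metric.ball (y i) r) (fun i => ?_) fun x hx => ?_
  · rw [Real.ball_eq_Ioo]
    exact Set.Ioo_infinite (by linarith)
  · rw [map_zero]
    exact h x (hball (by rwa [ball_pi y hr]))

end MvPolynomial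

section PartialDerivative

variable {n : ℕ} {f g : (Fin n → ℝ) → ℝ} {y : Fin n → ℝ}

open MvPolynomial in
theorem pd_eval (i : Fin n) (P : MvPolynomial (Fin n) ℝ) (y : Fin n → ℝ) :
    pd i (fun z => eval z P) y = eval y (pderiv i P) := by
  simp [pd, (hasFDerivAt_eval P y).fderiv, Pi.single_apply]

theorem pd_mul (i : Fin n) (hf : DifferentiableAt ℝ f y) (hg : DifferentiableAt ℝ g y) :
    pd i (fun z => f z * g z) y = f y * pd i g y + g y * pd i f y := by
  simp [pd, fderiv_fun_mul hf hg]

theorem pd_log (i : Fin n) (hf : DifferentiableAt ℝ f y) (hy : f y ≠ 0) :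
    pd i (fun z => Real.log (f z)) y = pd i f y / f y := by
  simp [pd, fderiv.log hf hy, div_eq_inv_mul]

end PartialDerivative

namespace IsRat

open MvPolynomial

variable {n : ℕ} {U : Set (Fin n → ℝ)} {f g : (Fin n → ℝ) → ℝ}

theorem congr (hg : IsRat U g) (hfg : ∀ y ∈ U, f y = g y) : IsRat U f := by
  obtain ⟨P, Q, hQ, hPQ⟩ := hg
  exact ⟨P, Q, hQ, fun y hy => hfg y hy ▸ hPQ y hy⟩

theorem const (c : ℝ) : IsRat U fun _ => c :=
  ⟨C c, 1, one_ne_zero, fun y _ => by simp⟩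

theorem add (hf : IsRat U f) (hg : IsRat U g) : IsRat U fun y => f y + g y := by
  obtain ⟨P₁, Q₁, hQ₁, h₁⟩ := hf
  obtain ⟨P₂, Q₂, hQ₂, h₂⟩ := hg
  refine ⟨P₁ * Q₂ + P₂ * Q₁, Q₁ * Q₂, mul_ne_zero hQ₁ hQ₂, fun y hy => ?_⟩
  simp only [map_add, map_mul, ← h₁ y hy, ← h₂ y hy]
  ring

theorem mul (hf : IsRat U f) (hg : IsRat U g) : IsRat U fun y => f y * g y := by
  obtain ⟨P₁, Q₁, hQ₁, h₁⟩ := hf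
  obtain ⟨P₂, Q₂, hQ₂, h₂⟩ := hg
  refine ⟨P₁ * P₂, Q₁ * Q₂, mul_ne_zero hQ₁ hQ₂, fun y hy => ?_⟩
  simp only [map_mul, ← h₁ y hy, ← h₂ y hy]
  ring

theorem inv (hU : IsOpen U) (hf : IsRat U f) (hf₀ : ∀ y ∈ U, f y ≠ 0) :
    IsRat U fun y => (f y)⁻¹ := by
  obtain ⟨P, Q, hQ, hPQ⟩ := hf
  rcases U.eq_empty_or_nonempty with rfl | hne
  · exact ⟨0, 1, one_ne_zero, by simp⟩
  -- `P ≠ 0`: otherwise `Q` would vanish on the nonempty open set `U`.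
  refine ⟨Q, P, fun hP => hQ (eq_zero_of_forall_mem_eval_eq_zero hU hne fun y hy => ?_),
    fun y hy => ?_⟩
  · simpa [hP, hf₀ y hy] using hPQ y hy
  · rw [← hPQ y hy]
    field_simp [hf₀ y hy]

theorem pd (hU : IsOpen U) (hfd : Differentiable ℝ f) (hf : IsRat U f) (i : Fin n) :
    IsRat U (pd i f) := by
  obtain ⟨P, Q, hQ, hPQ⟩ := hf
  refine ⟨pderiv i P * Q - P * pderiv i Q, Q * Q, mul_ne_zero hQ hQ, fun y hy => ?_⟩
  have hdiff : _root_.pd i (fun z => f z * eval z Q) y = _root_.pd i (fun z => eval z P) y := by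
    have : (fun z => f z * eval z Q) =ᶠ[nhds y] fun z => eval z P :=
      Filter.eventually_of_mem (hU.mem_nhds hy) hPQ
    simp only [_root_.pd, this.fderiv_eq]
  rw [pd_mul i (hfd y) (hasFDerivAt_eval Q y).differentiableAt, pd_eval, pd_eval] at hdiff
  simp only [map_mul, map_sub]
  linear_combination eval y Q * hdiff - eval y (pderiv i Q) * hPQ y hy

end IsRat

section RatSubalgebra

variable {n : ℕ} {U : Set (Fin n → ℝ)}

def ratSubalgebra (U : Set (Fin n → ℝ)) : Subalgebra ℝ ((Fin n → ℝ) → ℝ) where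
  carrier := {f | IsRat U f}
  mul_mem' := IsRat.mul
  add_mem' := IsRat.add
  algebraMap_mem' := IsRat.const

theorem mem_ratSubalgebra {f : (Fin n → ℝ) → ℝ} :
    f ∈ ratSubalgebra U ↔ IsRat U f := Iff.rfl

theorem IsRat.sub {f g : (Fin n → ℝ) → ℝ} (hf : IsRat U f) (hg : IsRat U g) :
    IsRat U fun y => f y - g y :=
  Subalgebra.sub_mem (ratSubalgebra U) hf hg

theorem IsRat.sum {ι : Type*} (s : Finset ι) {f : ι → (Fin n → ℝ) → ℝ}
    (hf : ∀ i ∈ s, IsRat U (f i)) : IsRat U fun y => ∑ i ∈ s, f i y := by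
  simpa only [mem_ratSubalgebra, Finset.sum_fn] using Subalgebra.sum_mem (ratSubalgebra U) hf

theorem IsRat.matrix_inv (hU : IsOpen U) {ι : Type*} [Fintype ι] [DecidableEq ι]
    {A B : (Fin n → ℝ) → Matrix ι ι ℝ}
    (hA : ∀ i j, IsRat U fun y => A y i j) (hAB : ∀ y ∈ U, A y * B y = 1) (i j : ι) :
    IsRat U fun y => B y i j := by
  let A' : Matrix ι ι (ratSubalgebra U) := fun i j => ⟨fun y => A y i j, hA i j⟩
  have hev : ∀ y, ((Pi.evalRingHom _ y).comp (ratSubalgebra U).val.toRingHom).mapMatrix A' = A y :=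
    fun y => rfl
  have hdet : ∀ y, (A'.det : (Fin n → ℝ) → ℝ) y = (A y).det := fun y => by
    rw [← hev y, ← RingHom.map_det]; rfl
  have hadj : ∀ y, (A'.adjugate i j : (Fin n → ℝ) → ℝ) y = (A y).adjugate i j := fun y => by
    rw [← hev y, ← RingHom.map_adjugate]; rfl
  have hdet₀ : ∀ y ∈ U, (A y).det ≠ 0 := fun y hy =>
    (Matrix.isUnit_det_of_right_inverse (hAB y hy)).ne_zero
  refine ((IsRat.inv hU A'.det.2 fun y hy => (hdet y).symm ▸ hdet₀ y hy).mul
    (A'.adjugate i j).2).congr fun y hy => ?_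
  rw [hdet, hadj, ← Matrix.inv_eq_right_inv (hAB y hy), Matrix.inv_def]
  simp [Ring.inverse_eq_inv]

end RatSubalgebra

theorem Matrix.card_sub_one_mul_eq_contraction {R ι : Type*} [CommRing R] [Fintype ι]
    [DecidableEq ι] {A B : Matrix ι ι R} (hAB : A * B = 1) (hA : A.IsSymm) (η : R)
    (dη : ι → R) (D : ι → ι → ι → R) (k : ι)
    (hC : ∀ i j, η * D i j k + A j k * dη i = η * D k i j + A i j * dη k) :
    ((Fintype.card ι : R) - 1) * dη k = η * ∑ j, ∑ i, B j i * (D i j k - D k i j) := by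
  have hcontract : ∑ j, ∑ i, B j i * (A j k * dη i) = dη k :=
    calc ∑ j, ∑ i, B j i * (A j k * dη i) = ∑ i, (A * B) k i * dη i := by
          rw [Finset.sum_comm]
          simp only [Matrix.mul_apply, Finset.sum_mul, hA.apply k]
          exact Finset.sum_congr rfl fun _ _ => Finset.sum_congr rfl fun _ _ => by ring
      _ = dη k := by simp [hAB, Matrix.one_apply]
  have htrace : ∑ j, ∑ i, B j i * (A i j * dη k) = Fintype.card ι * dη k :=
    calc ∑ j, ∑ i, B j i * (A i j * dη k) = (B * A).trace * dη k := by
          simp only [Matrix.trace, Matrix.diag, Matrix.mul_apply, Finset.sum_mul, mul_assoc]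
      _ = Fintype.card ι * dη k := by rw [Matrix.trace_mul_comm, hAB, Matrix.trace_one]
  have hsum : ∑ j, ∑ i, B j i * (η * D i j k + A j k * dη i)
      = ∑ j, ∑ i, B j i * (η * D k i j + A i j * dη k) := by simp only [hC]
  simp only [mul_add, Finset.sum_add_distrib, hcontract, htrace, mul_left_comm (B _ _) η] at hsum
  simp only [mul_sub, Finset.sum_sub_distrib, Finset.mul_sum]
  linear_combination -hsum

/-- For an `n`-dimensional AR-Finsler manifold (`n ≥ 2`), with `g_{ij} = η a_{ij}`,
`(a^{ij})` the inverse matrix of `(a_{ij})`, and using the total symmetry of the Cartan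
torsion `2C_{ijk} = η ∂̇_k a_{ij} + a_{ij} ∂̇_k η`, one has
`∂̇_k log η = (1/(n−1)) a^{ji}(∂̇_i a_{jk} − ∂̇_k a_{ij})`; consequently each
`∂̇_k log η` is a rational function in `y`. -/
theorem stmt3 {n : ℕ} (hn : 2 ≤ n) (U : Set (Fin n → ℝ)) (hU : IsOpen U)
    (η : (Fin n → ℝ) → ℝ) (a aInv : Fin n → Fin n → (Fin n → ℝ) → ℝ)
    (hη : ∀ y ∈ U, 0 < η y) (hηd : Differentiable ℝ η)
    (had : ∀ i j, Differentiable ℝ (a i j))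
    (ha : ∀ i j, IsRat U (a i j))
    (hasym : ∀ i j, ∀ y ∈ U, a i j y = a j i y)
    (hInv : ∀ y ∈ U, ∀ j k, ∑ i, a j i y * aInv i k y = if j = k then (1:ℝ) else 0)
    (hCsym : ∀ i j k, ∀ y ∈ U,
      η y * pd i (a j k) y + a j k y * pd i η y
        = η y * pd k (a i j) y + a i j y * pd k η y) :
    ∀ k, (∀ y ∈ U,
        pd k (fun z => Real.log (η z)) y
          = (1 / ((n : ℝ) - 1)) * ∑ j, ∑ i, aInv j i y * (pd i (a j k) y - pd k (a i j) y))
      ∧ IsRat U (pd k (fun z => Real.log (η z))) := by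
  intro k
  let A : (Fin n → ℝ) → Matrix (Fin n) (Fin n) ℝ := fun y => Matrix.of fun i j => a i j y
  let B : (Fin n → ℝ) → Matrix (Fin n) (Fin n) ℝ := fun y => Matrix.of fun i j => aInv i j y
  have hAB : ∀ y ∈ U, A y * B y = 1 := fun y hy => by
    ext j l
    simpa [A, B, Matrix.mul_apply, Matrix.one_apply] using hInv y hy j l
  have hn₁ : (n : ℝ) - 1 ≠ 0 := by
    have : (2 : ℝ) ≤ n := by exact_mod_cast hn
    linarith
  have hformula : ∀ y ∈ U, pd k (fun z => Real.log (η z)) y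
      = (1 / ((n : ℝ) - 1)) * ∑ j, ∑ i, aInv j i y * (pd i (a j k) y - pd k (a i j) y) := by
    intro y hy
    have hcontr := Matrix.card_sub_one_mul_eq_contraction (hAB y hy)
      (Matrix.IsSymm.ext fun i j => hasym j i y hy) (η y) (pd · η y)
      (fun i j k => pd i (a j k) y) k fun i j => hCsym i j k y hy
    simp only [B, Matrix.of_apply, Fintype.card_fin] at hcontr
    have hη₀ : η y ≠ 0 := (hη y hy).ne'
    rw [pd_log k (hηd y) hη₀]
    field_simp
    linear_combination hcontr
  refine ⟨hformula, IsRat.congr ?_ hformula⟩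
  have haInv : ∀ i j, IsRat U (aInv i j) := IsRat.matrix_inv hU ha hAB
  exact (IsRat.const _).mul <| IsRat.sum _ fun j _ => IsRat.sum _ fun i _ =>
    (haInv j i).mul (((ha j k).pd hU (had j k) i).sub ((ha i j).pd hU (had i j) k))
end

section
/- A regular AR-Finsler manifold (M,F) of dimension n ≥ 2 is Riemannian if and only if a^{jk}(n·∂̇_k a_{ji} − ∂̇_i a_{jk}) = 0 for all i. -/
open Finset

noncomputable def cartanTorsion {n : ℕ} (η : (Fin n → ℝ) → ℝ)
    (a : Fin n → Fin n → (Fin n → ℝ) → ℝ) (i j k : Fin n) (y : Fin n → ℝ) : ℝ :=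
  η y * pd i (a j k) y + a j k y * pd i η y

theorem pd_congr_of_eqOn {n : ℕ} {U : Set (Fin n → ℝ)} (hU : IsOpen U)
    {f g : (Fin n → ℝ) → ℝ} (hfg : Set.EqOn f g U) {y : Fin n → ℝ} (hy : y ∈ U) (i : Fin n) :
    pd i f y = pd i g y := by
  rw [pd, pd, Filter.EventuallyEq.fderiv_eq (Filter.eventuallyEq_of_mem (hU.mem_nhds hy) hfg)]

section Contraction

variable {ι : Type*} [Fintype ι] [DecidableEq ι] {A B : ι → ι → ℝ}

theorem sum_inv_mul_left (hAB : ∀ j k, ∑ i, A j i * B i k = if j = k then 1 else 0)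
    (v : ι → ℝ) (i : ι) : ∑ j, ∑ k, B j k * (A i j * v k) = v i :=
  calc ∑ j, ∑ k, B j k * (A i j * v k) = ∑ k, (∑ j, A i j * B j k) * v k := by
        rw [sum_comm]
        exact sum_congr rfl fun k _ ↦ by rw [sum_mul]; exact sum_congr rfl fun j _ ↦ by ring
    _ = v i := by simp [hAB]

theorem sum_inv_mul_self (hA : ∀ i j, A i j = A j i)
    (hAB : ∀ j k, ∑ i, A j i * B i k = if j = k then 1 else 0) :
    ∑ j, ∑ k, B j k * A j k = Fintype.card ι :=
  calc ∑ j, ∑ k, B j k * A j k = ∑ k, ∑ j, A k j * B j k := by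
        rw [sum_comm]
        exact sum_congr rfl fun k _ ↦ sum_congr rfl fun j _ ↦ by rw [hA, mul_comm]
    _ = Fintype.card ι := by simp [hAB]

theorem mul_sum_inv_mul_eq_card_sub_one_mul (hA : ∀ i j, A i j = A j i)
    (hAB : ∀ j k, ∑ i, A j i * B i k = if j = k then 1 else 0)
    {e : ℝ} {d : ι → ℝ} {D : ι → ι → ι → ℝ} {i : ι}
    (hC : ∀ j k, e * D i j k + A j k * d i = e * D k i j + A i j * d k)
    (hD : ∀ j k, D k j i = D k i j) :
    e * ∑ j, ∑ k, B j k * (Fintype.card ι * D k j i - D i j k)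
      = (Fintype.card ι - 1) * ∑ j, ∑ k, B j k * (e * D i j k + A j k * d i) := by
  set N : ℝ := (Fintype.card ι : ℝ)
  set T := ∑ j, ∑ k, B j k * D i j k
  set S := ∑ j, ∑ k, B j k * D k j i
  have hdiff : ∑ j, ∑ k, B j k * (N * D k j i - D i j k) = N * S - T := by
    simp only [mul_sub, sum_sub_distrib, mul_sum, mul_left_comm N, S, T]
  have hT : ∑ j, ∑ k, B j k * (e * D i j k + A j k * d i) = e * T + N * d i := by
    rw [show N = _ from (sum_inv_mul_self hA hAB).symm]
    simp only [mul_add, sum_add_distrib, mul_sum, sum_mul, mul_assoc, mul_left_comm e, T]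
  have hS : ∑ j, ∑ k, B j k * (e * D i j k + A j k * d i) = e * S + d i := by
    simp only [hC, hD, mul_add, sum_add_distrib, mul_sum, mul_left_comm e, S, sum_inv_mul_left hAB]
  rw [hdiff, hT]
  linear_combination (-N) * (hT.symm.trans hS)

end Contraction

theorem stmt8_general {n : ℕ} (hn : 2 ≤ n) (U : Set (Fin n → ℝ)) (hU : IsOpen U)
    (η : (Fin n → ℝ) → ℝ) (a aInv : Fin n → Fin n → (Fin n → ℝ) → ℝ)
    (hη : ∀ y ∈ U, 0 < η y)
    (hasym : ∀ i j, ∀ y ∈ U, a i j y = a j i y)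
    (hInv : ∀ y ∈ U, ∀ j k, ∑ i, a j i y * aInv i k y = if j = k then (1:ℝ) else 0)
    (hCsym : ∀ i j k, ∀ y ∈ U,
      η y * pd i (a j k) y + a j k y * pd i η y
        = η y * pd k (a i j) y + a i j y * pd k η y)
    (hDeicke : (∀ i, ∀ y ∈ U,
        ∑ j, ∑ k, (aInv j k y / η y) * (η y * pd i (a j k) y + a j k y * pd i η y) = 0) →
      ∀ i j k, ∀ y ∈ U, η y * pd i (a j k) y + a j k y * pd i η y = 0) :
    (∀ i j k, ∀ y ∈ U, η y * pd i (a j k) y + a j k y * pd i η y = 0) ↔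
      (∀ i, ∀ y ∈ U,
        ∑ j, ∑ k, aInv j k y * ((n : ℝ) * pd k (a j i) y - pd i (a j k) y) = 0) := by
  have key : ∀ i, ∀ y ∈ U,
      η y * ∑ j, ∑ k, aInv j k y * ((n : ℝ) * pd k (a j i) y - pd i (a j k) y)
        = ((n : ℝ) - 1) * ∑ j, ∑ k, aInv j k y * cartanTorsion η a i j k y := fun i y hy ↦ by
    have h := mul_sum_inv_mul_eq_card_sub_one_mul (fun j k ↦ hasym j k y hy) (hInv y hy)
      (d := fun m ↦ pd m η y) (D := fun m j k ↦ pd m (a j k) y) (hCsym i · · y hy)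
      (fun j k ↦ pd_congr_of_eqOn hU (fun z hz ↦ hasym j i z hz) hy k)
    rwa [Fintype.card_fin] at h
  have hn₁ : (n : ℝ) - 1 ≠ 0 := by
    have : (2 : ℝ) ≤ n := by exact_mod_cast hn
    linarith
  constructor
  · intro hC i y hy
    have h := key i y hy
    simp only [cartanTorsion, hC _ _ _ y hy, mul_zero, sum_const_zero] at h
    exact (mul_eq_zero.mp h).resolve_left (hη y hy).ne'
  · intro h
    refine hDeicke fun i y hy ↦ ?_
    have h' := key i y hy
    rw [h i y hy, mul_zero, eq_comm, mul_eq_zero, or_iff_right hn₁] at h'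
    simp only [div_mul_eq_mul_div, ← sum_div]
    exact div_eq_zero_iff.mpr (Or.inl h')

/-- A regular AR-Finsler manifold of dimension `n ≥ 2` is Riemannian (vanishing Cartan
torsion `C_{ijk} = η ∂̇_i a_{jk} + a_{jk} ∂̇_i η`) if and only if
`a^{jk}(n ∂̇_k a_{ji} − ∂̇_i a_{jk}) = 0` for all `i`.  Regularity enters via Deicke's
theorem, and the total symmetry of the Cartan torsion is used. -/
theorem stmt8 {n : ℕ} (hn : 2 ≤ n) (U : Set (Fin n → ℝ)) (hU : IsOpen U)
    (η : (Fin n → ℝ) → ℝ) (a aInv : Fin n → Fin n → (Fin n → ℝ) → ℝ)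
    (hη : ∀ y ∈ U, 0 < η y) (hηd : Differentiable ℝ η)
    (had : ∀ i j, Differentiable ℝ (a i j))
    (hasym : ∀ i j, ∀ y ∈ U, a i j y = a j i y)
    (hInv : ∀ y ∈ U, ∀ j k, ∑ i, a j i y * aInv i k y = if j = k then (1:ℝ) else 0)
    (hCsym : ∀ i j k, ∀ y ∈ U,
      η y * pd i (a j k) y + a j k y * pd i η y
        = η y * pd k (a i j) y + a i j y * pd k η y)
    (hDeicke : (∀ i, ∀ y ∈ U,
        ∑ j, ∑ k, (aInv j k y / η y) * (η y * pd i (a j k) y + a j k y * pd i η y) = 0) →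
      ∀ i j k, ∀ y ∈ U, η y * pd i (a j k) y + a j k y * pd i η y = 0) :
    (∀ i j k, ∀ y ∈ U, η y * pd i (a j k) y + a j k y * pd i η y = 0) ↔
      (∀ i, ∀ y ∈ U,
        ∑ j, ∑ k, aInv j k y * ((n : ℝ) * pd k (a j i) y - pd i (a j k) y) = 0) :=
  stmt8_general hn U hU η a aInv hη hasym hInv hCsym hDeicke
end
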